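/- For any differentiable loss ℓ: ℝ^{m_y×n̄} → ℝ, along any gradient flow trajectory of L(W,B) = ℓ(f(X,W,B)_{*I}) for an H-layer multiscale linear GNN, for all t ≥ 0: d/dt L(W_t,B_t) = −Σ_{l=0}^H ‖vec[V_t (X(S^l)_{*I})ᵀ]‖²_{F_{(l),t}} − Σ_{i=1}^H ‖Σ_{l=i}^H J_{(i,l),t} vec[V_t (X(S^l)_{*I})ᵀ]‖₂², where V_t is the derivative of ℓ at the network output f(X,W_t,B_t)_{*I}. -/

import Mathlib

open Matrix
open scoped Kronecker

noncomputable section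

/-- Squared Frobenius norm of a real matrix. -/
def frobSq {α β : Type*} [Fintype α] [Fintype β] (M : Matrix α β ℝ) : ℝ :=
  ∑ i, ∑ j, (M i j) ^ 2

/-- Squared Euclidean norm of a vector. -/
def vecNormSq {α : Type*} [Fintype α] (v : α → ℝ) : ℝ := ∑ i, (v i) ^ 2

/-- Quadratic form `vᵀ M v` (Mahalanobis-type square "norm" `‖v‖_M²`). -/
def quadForm {α : Type*} [Fintype α] (M : Matrix α α ℝ) (v : α → ℝ) : ℝ :=
  v ⬝ᵥ M.mulVec v

/-- Column-stacking vectorization of a matrix: `vecM M (j, i) = M i j`. -/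
def vecM {α β : Type*} (M : Matrix α β ℝ) : β × α → ℝ := fun p => M p.2 p.1

/-- Smallest (real) eigenvalue of a square matrix, as infimum of its eigenvalue set. -/
def lambdaMin {α : Type*} [Fintype α] (A : Matrix α α ℝ) : ℝ :=
  sInf {r : ℝ | ∃ v : α → ℝ, v ≠ 0 ∧ A.mulVec v = r • v}

/-- The `min(#rows, #cols)`-th largest singular value of a matrix. -/
def sigmaMin {α β : Type*} [Fintype α] [Fintype β] (M : Matrix α β ℝ) : ℝ :=
  if Fintype.card α ≤ Fintype.card β then Real.sqrt (lambdaMin (M * Mᵀ))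
  else Real.sqrt (lambdaMin (Mᵀ * M))

/-- Entrywise partial-derivative matrix (gradient) of a scalar function of a matrix. -/
def entryDeriv {a b : ℕ} (L : Matrix (Fin a) (Fin b) ℝ → ℝ)
    (M : Matrix (Fin a) (Fin b) ℝ) : Matrix (Fin a) (Fin b) ℝ :=
  Matrix.of fun i j => deriv (fun s : ℝ => L (M + s • Matrix.single i j 1)) 0

/-- `Bseg B a b = B (b-1) * ⋯ * B a` (in the paper's 1-based notation, with
`B l` here being the paper's `B_{(l+1)} : ℝ^{m_{l+1} × m_l}`, this is `B̄^{(a+1:b)}`,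
the product of the layers `a+1, …, b`); `Bseg B a a = 1` and in particular
`Bseg B 0 l` is the paper's `B̄^{(1:l)}`. -/
def Bseg {m : ℕ → ℕ} (B : ∀ l : ℕ, Matrix (Fin (m (l + 1))) (Fin (m l)) ℝ) (a : ℕ) :
    (b : ℕ) → Matrix (Fin (m b)) (Fin (m a)) ℝ
  | 0 => if h : a = 0 then by rw [h]; exact 1 else 0
  | b + 1 => if h : a = b + 1 then by rw [h]; exact 1 else B b * Bseg B a b


attribute [local instance] Matrix.frobeniusNormedAddCommGroup Matrix.frobeniusNormedSpace

/-- Output (restricted to training columns) of the `H`-layer multiscale linear GNN. -/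
def msOut {n nb my : ℕ} {m : ℕ → ℕ} (H : ℕ)
    (X : Matrix (Fin (m 0)) (Fin n) ℝ) (S : Matrix (Fin n) (Fin n) ℝ)
    (ι : Fin nb → Fin n)
    (W : ∀ l : ℕ, Matrix (Fin my) (Fin (m l)) ℝ)
    (B : ∀ l : ℕ, Matrix (Fin (m (l + 1))) (Fin (m l)) ℝ) : Matrix (Fin my) (Fin nb) ℝ :=
  ∑ l ∈ Finset.range (H + 1), W l * Bseg B 0 l * X * (S ^ l).submatrix id ι


/-!
Along a gradient flow the loss decreases at the rate of the squared norm of its gradient: by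
the chain rule `d/dt L = Σ ⟨∂L/∂θ, θ̇⟩ = -Σ ‖∂L/∂θ‖²` over the parameter blocks `θ`. The output
is affine in each single block, so the partial gradients are explicit in `V`:
`∂L/∂W_(l) = V (B̄^{(1:l)} X (S^l)_{*I})ᵀ` and
`∂L/∂B_(i) = Σ_{l ≥ i} (W_(l) B̄^{(i+1:l)})ᵀ V (B̄^{(1:i-1)} X (S^l)_{*I})ᵀ`.
The two sums of the formula are the squared Frobenius norms of these, rewritten through
`(C ⊗ D) vec M = vec (D M Cᵀ)`.
-/

open Finset

section FrobeniusInner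

variable {α β γ : Type*} [Fintype α] [Fintype β]

def frobInner (A B : Matrix α β ℝ) : ℝ := ∑ i, ∑ j, A i j * B i j

lemma frobInner_self (A : Matrix α β ℝ) : frobInner A A = frobSq A := by
  simp only [frobInner, frobSq, sq]

lemma frobInner_neg_right (A B : Matrix α β ℝ) : frobInner A (-B) = -frobInner A B := by
  simp [frobInner]

lemma frobInner_add_right (A B C : Matrix α β ℝ) :
    frobInner A (B + C) = frobInner A B + frobInner A C := by
  simp [frobInner, mul_add, sum_add_distrib]

lemma frobInner_sum_right {κ : Type*} (s : Finset κ) (A : Matrix α β ℝ)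
    (B : κ → Matrix α β ℝ) : frobInner A (∑ k ∈ s, B k) = ∑ k ∈ s, frobInner A (B k) := by
  simp only [frobInner, Matrix.sum_apply, Finset.mul_sum]
  exact (Finset.sum_congr rfl fun _ _ => Finset.sum_comm).trans Finset.sum_comm

lemma frobInner_sum_left {κ : Type*} (s : Finset κ) (A : κ → Matrix α β ℝ)
    (B : Matrix α β ℝ) : frobInner (∑ k ∈ s, A k) B = ∑ k ∈ s, frobInner (A k) B := by
  simp only [frobInner, Matrix.sum_apply, Finset.sum_mul]
  exact (Finset.sum_congr rfl fun _ _ => Finset.sum_comm).trans Finset.sum_comm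

lemma frobInner_eq_trace (A B : Matrix α β ℝ) : frobInner A B = (Aᵀ * B).trace := by
  simp only [Matrix.trace, Matrix.diag, Matrix.mul_apply, Matrix.transpose_apply, frobInner]
  exact Finset.sum_comm

lemma frobInner_mul_left [Fintype γ] (V : Matrix α β ℝ) (A : Matrix α γ ℝ)
    (B : Matrix γ β ℝ) : frobInner V (A * B) = frobInner (Aᵀ * V) B := by
  rw [frobInner_eq_trace, frobInner_eq_trace, Matrix.transpose_mul, Matrix.transpose_transpose,
    Matrix.mul_assoc]

lemma frobInner_mul_right [Fintype γ] (V : Matrix α β ℝ) (A : Matrix α γ ℝ)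
    (B : Matrix γ β ℝ) : frobInner V (A * B) = frobInner (V * Bᵀ) A := by
  rw [frobInner_eq_trace, frobInner_eq_trace, Matrix.transpose_mul, Matrix.transpose_transpose,
    Matrix.trace_mul_comm Vᵀ, Matrix.trace_mul_cycle B Vᵀ A, Matrix.mul_assoc]

lemma frobInner_mul_mul [Fintype γ] {δ : Type*} [Fintype δ] (V : Matrix α β ℝ)
    (A : Matrix α γ ℝ) (N : Matrix γ δ ℝ) (Q : Matrix δ β ℝ) :
    frobInner V (A * N * Q) = frobInner (Aᵀ * V * Qᵀ) N := by
  rw [frobInner_mul_right, frobInner_mul_left, Matrix.mul_assoc]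

lemma frobInner_single_one [DecidableEq α] [DecidableEq β] (A : Matrix α β ℝ) (i : α) (j : β) :
    frobInner A (Matrix.single i j 1) = A i j := by
  simp [frobInner, Matrix.single_apply, ite_and]

end FrobeniusInner

section Vectorization

variable {α β γ δ : Type*} [Fintype α] [Fintype β]

lemma dotProduct_vecM (A B : Matrix α β ℝ) : vecM A ⬝ᵥ vecM B = frobInner A B := by
  simp only [dotProduct, vecM, frobInner, Fintype.sum_prod_type]
  exact Finset.sum_comm

lemma vecNormSq_vecM (A : Matrix α β ℝ) : vecNormSq (vecM A) = frobSq A := by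
  rw [vecNormSq, ← frobInner_self, ← dotProduct_vecM]
  simp only [dotProduct, sq]

omit [Fintype α] [Fintype β] in
lemma vecM_sum {κ : Type*} (s : Finset κ) (A : κ → Matrix α β ℝ) :
    vecM (∑ k ∈ s, A k) = ∑ k ∈ s, vecM (A k) := by
  funext p
  simp [vecM, Matrix.sum_apply]

omit [Fintype α] in
lemma kronecker_mulVec_vecM [Fintype δ] (C : Matrix γ δ ℝ) (D : Matrix α β ℝ)
    (M : Matrix β δ ℝ) : (C ⊗ₖ D) *ᵥ vecM M = vecM (D * M * Cᵀ) := by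
  funext ⟨k, i⟩
  simp only [Matrix.mulVec, dotProduct, vecM, Fintype.sum_prod_type, Matrix.kroneckerMap_apply,
    Matrix.mul_apply, Matrix.transpose_apply, Finset.sum_mul]
  exact Finset.sum_congr rfl fun _ _ => Finset.sum_congr rfl fun _ _ => by ring

lemma quadForm_kronecker_one [Fintype γ] [DecidableEq α] (P : Matrix γ β ℝ)
    (U : Matrix α β ℝ) : quadForm ((Pᵀ * P) ⊗ₖ (1 : Matrix α α ℝ)) (vecM U) = frobSq (U * Pᵀ) := by
  rw [quadForm, kronecker_mulVec_vecM, Matrix.one_mul, Matrix.transpose_mul,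
    Matrix.transpose_transpose, ← Matrix.mul_assoc, dotProduct_vecM, frobInner_mul_right,
    frobInner_self]

end Vectorization

section Bseg

variable {m : ℕ → ℕ} (B : ∀ l : ℕ, Matrix (Fin (m (l + 1))) (Fin (m l)) ℝ)

@[simp] lemma Bseg_self (a : ℕ) : Bseg B a a = 1 := by
  cases a <;> simp [Bseg]

lemma Bseg_succ {a b : ℕ} (h : a ≠ b + 1) : Bseg B a (b + 1) = B b * Bseg B a b := by
  simp [Bseg, h]

lemma Bseg_zero_succ (b : ℕ) : Bseg B 0 (b + 1) = B b * Bseg B 0 b :=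
  Bseg_succ B (by omega)

lemma Bseg_mul_mul_Bseg {k l : ℕ} (h : k < l) :
    Bseg B (k + 1) l * B k * Bseg B 0 k = Bseg B 0 l := by
  induction l with
  | zero => omega
  | succ l ih =>
    rcases Nat.lt_or_ge k l with hkl | hkl
    · rw [Bseg_succ B (by omega), Bseg_zero_succ, Matrix.mul_assoc, Matrix.mul_assoc,
        ← Matrix.mul_assoc (Bseg B (k + 1) l), ih hkl]
    · obtain rfl : k = l := by omega
      simp [Bseg_zero_succ]

lemma Bseg_update_of_le {k l : ℕ} (M : Matrix (Fin (m (k + 1))) (Fin (m k)) ℝ) (h : l ≤ k) :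
    Bseg (Function.update B k M) 0 l = Bseg B 0 l := by
  induction l with
  | zero => simp
  | succ l ih =>
    rw [Bseg_zero_succ, Bseg_zero_succ, ih (by omega), Function.update_of_ne (by omega)]

lemma Bseg_update_of_lt {k l : ℕ} (M : Matrix (Fin (m (k + 1))) (Fin (m k)) ℝ) (h : k < l) :
    Bseg (Function.update B k M) 0 l = Bseg B (k + 1) l * M * Bseg B 0 k := by
  induction l with
  | zero => omega
  | succ l ih =>
    rcases Nat.lt_or_ge k l with hkl | hkl
    · rw [Bseg_zero_succ, ih hkl, Bseg_succ B (by omega), Function.update_of_ne (by omega),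
        Matrix.mul_assoc, Matrix.mul_assoc, Matrix.mul_assoc]
    · obtain rfl : k = l := by omega
      rw [Bseg_zero_succ, Function.update_self, Bseg_update_of_le B M le_rfl, Bseg_self,
        Matrix.one_mul]

lemma Bseg_update_add {k l : ℕ} (N : Matrix (Fin (m (k + 1))) (Fin (m k)) ℝ) (h : k < l) :
    Bseg (Function.update B k (B k + N)) 0 l = Bseg B 0 l + Bseg B (k + 1) l * N * Bseg B 0 k := by
  rw [Bseg_update_of_lt B _ h, Matrix.mul_add, Matrix.add_mul, Bseg_mul_mul_Bseg B h]

end Bseg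

section EntrywiseDeriv

variable {α β γ : Type*}

def HasEntrywiseDerivWithinAt (f : ℝ → Matrix α β ℝ) (f' : Matrix α β ℝ) (s : Set ℝ) (x : ℝ) :
    Prop :=
  ∀ i j, HasDerivWithinAt (fun u => f u i j) (f' i j) s x

namespace HasEntrywiseDerivWithinAt

variable {s : Set ℝ} {x : ℝ}

lemma const (C : Matrix α β ℝ) : HasEntrywiseDerivWithinAt (fun _ => C) 0 s x :=
  fun i j => hasDerivWithinAt_const x s (C i j)

lemma mul [Fintype β] {f : ℝ → Matrix α β ℝ} {g : ℝ → Matrix β γ ℝ} {f' : Matrix α β ℝ}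
    {g' : Matrix β γ ℝ} (hf : HasEntrywiseDerivWithinAt f f' s x)
    (hg : HasEntrywiseDerivWithinAt g g' s x) :
    HasEntrywiseDerivWithinAt (fun u => f u * g u) (f' * g x + f x * g') s x := by
  intro i j
  simp only [Matrix.mul_apply, Matrix.add_apply, ← Finset.sum_add_distrib]
  exact HasDerivWithinAt.fun_sum fun k _ => (hf i k).mul (hg k j)

lemma mul_const [Fintype β] {f : ℝ → Matrix α β ℝ} {f' : Matrix α β ℝ}
    (hf : HasEntrywiseDerivWithinAt f f' s x) (C : Matrix β γ ℝ) :
    HasEntrywiseDerivWithinAt (fun u => f u * C) (f' * C) s x := by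
  simpa using hf.mul (const C)

lemma sum {κ : Type*} (t : Finset κ) {f : κ → ℝ → Matrix α β ℝ} {f' : κ → Matrix α β ℝ}
    (hf : ∀ k ∈ t, HasEntrywiseDerivWithinAt (f k) (f' k) s x) :
    HasEntrywiseDerivWithinAt (fun u => ∑ k ∈ t, f k u) (∑ k ∈ t, f' k) s x := by
  intro i j
  simp only [Matrix.sum_apply]
  exact HasDerivWithinAt.fun_sum fun k hk => hf k hk i j

variable [Fintype α] [Fintype β]

lemma hasDerivWithinAt {f : ℝ → Matrix α β ℝ} {f' : Matrix α β ℝ}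
    (hf : HasEntrywiseDerivWithinAt f f' s x) : HasDerivWithinAt f f' s x := by
  classical
  have h : HasDerivWithinAt (fun u => ∑ i, ∑ j, Matrix.single i j (f u i j))
      (∑ i, ∑ j, Matrix.single i j (f' i j)) s x :=
    HasDerivWithinAt.fun_sum fun i _ => HasDerivWithinAt.fun_sum fun j _ => by
      simpa using (hf i j).smul_const (Matrix.single i j (1 : ℝ))
  simpa only [← Matrix.matrix_eq_sum_single] using h

end HasEntrywiseDerivWithinAt

end EntrywiseDeriv

lemma hasEntrywiseDerivWithinAt_Bseg {m : ℕ → ℕ}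
    {Bt : ℝ → ∀ l : ℕ, Matrix (Fin (m (l + 1))) (Fin (m l)) ℝ}
    {B' : ∀ l : ℕ, Matrix (Fin (m (l + 1))) (Fin (m l)) ℝ} {s : Set ℝ} {x : ℝ} {l : ℕ}
    (hB : ∀ k < l, HasEntrywiseDerivWithinAt (fun u => Bt u k) (B' k) s x) :
    HasEntrywiseDerivWithinAt (fun u => Bseg (Bt u) 0 l)
      (∑ k ∈ range l, Bseg (Bt x) (k + 1) l * B' k * Bseg (Bt x) 0 k) s x := by
  induction l with
  | zero => simpa using HasEntrywiseDerivWithinAt.const (s := s) (x := x) 1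
  | succ l ih =>
    have hprod := (hB l l.lt_succ_self).mul (ih fun k hk => hB k (by omega))
    simp only [← Bseg_zero_succ] at hprod
    convert hprod using 1
    have hlow : ∀ k ∈ range l, Bseg (Bt x) (k + 1) (l + 1) * B' k * Bseg (Bt x) 0 k
        = Bt x l * (Bseg (Bt x) (k + 1) l * B' k * Bseg (Bt x) 0 k) := fun k hk => by
      rw [Bseg_succ _ (by simp at hk; omega), Matrix.mul_assoc, Matrix.mul_assoc,
        Matrix.mul_assoc]
    rw [sum_range_succ, sum_congr rfl hlow, ← Matrix.mul_sum, Bseg_self, Matrix.one_mul]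
    exact add_comm _ _

section Gradient

variable {a b : ℕ} {ℓ : Matrix (Fin a) (Fin b) ℝ → ℝ}

lemma hasDerivAt_comp_add_smul (hℓ : Differentiable ℝ ℓ) (Y D : Matrix (Fin a) (Fin b) ℝ) :
    HasDerivAt (fun s : ℝ => ℓ (Y + s • D)) (fderiv ℝ ℓ Y D) 0 := by
  have hline : HasDerivAt (fun s : ℝ => Y + s • D) D 0 := by
    have h := ((hasDerivAt_id (0 : ℝ)).smul_const D).const_add Y
    rwa [one_smul] at h
  have h := (hℓ (Y + (0 : ℝ) • D)).hasFDerivAt.comp_hasDerivAt 0 hline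
  simp only [zero_smul, add_zero] at h
  exact h

lemma fderiv_apply_eq_frobInner_entryDeriv (hℓ : Differentiable ℝ ℓ)
    (Y C : Matrix (Fin a) (Fin b) ℝ) : fderiv ℝ ℓ Y C = frobInner (entryDeriv ℓ Y) C := by
  conv_lhs => rw [Matrix.matrix_eq_sum_single C]
  simp only [map_sum, frobInner, entryDeriv, Matrix.of_apply,
    (hasDerivAt_comp_add_smul hℓ _ _).deriv]
  refine sum_congr rfl fun i _ => sum_congr rfl fun j _ => ?_
  rw [show Matrix.single i j (C i j) = C i j • Matrix.single i j (1 : ℝ) by simp,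
    _root_.map_smul, smul_eq_mul, mul_comm]

lemma HasEntrywiseDerivWithinAt.hasDerivWithinAt_comp (hℓ : Differentiable ℝ ℓ)
    {f : ℝ → Matrix (Fin a) (Fin b) ℝ} {f' : Matrix (Fin a) (Fin b) ℝ} {s : Set ℝ} {x : ℝ}
    (hf : HasEntrywiseDerivWithinAt f f' s x) :
    HasDerivWithinAt (fun u => ℓ (f u)) (frobInner (entryDeriv ℓ (f x)) f') s x := by
  rw [← fderiv_apply_eq_frobInner_entryDeriv hℓ]
  exact (hℓ (f x)).hasFDerivAt.comp_hasDerivWithinAt x hf.hasDerivWithinAt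

lemma entryDeriv_comp_apply (hℓ : Differentiable ℝ ℓ) {c d : ℕ}
    {g : Matrix (Fin c) (Fin d) ℝ → Matrix (Fin a) (Fin b) ℝ} {M : Matrix (Fin c) (Fin d) ℝ}
    {i : Fin c} {j : Fin d} {C : Matrix (Fin a) (Fin b) ℝ}
    (hg : ∀ s : ℝ, g (M + s • Matrix.single i j 1) = g M + s • C) :
    entryDeriv (fun N => ℓ (g N)) M i j = frobInner (entryDeriv ℓ (g M)) C := by
  change deriv (fun s : ℝ => ℓ (g (M + s • Matrix.single i j 1))) 0 = _
  simp only [hg]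
  rw [(hasDerivAt_comp_add_smul hℓ _ _).deriv, fderiv_apply_eq_frobInner_entryDeriv hℓ]

end Gradient

section MultiscaleGNN

variable {n nb my H : ℕ} {m : ℕ → ℕ}
  (X : Matrix (Fin (m 0)) (Fin n) ℝ) (S : Matrix (Fin n) (Fin n) ℝ) (ι : Fin nb → Fin n)

/-- `∂L/∂W_(l)`, when `V` is the derivative of `ℓ` at the output. -/
def msGradW (B : ∀ l : ℕ, Matrix (Fin (m (l + 1))) (Fin (m l)) ℝ)
    (V : Matrix (Fin my) (Fin nb) ℝ) (l : ℕ) : Matrix (Fin my) (Fin (m l)) ℝ :=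
  V * (Bseg B 0 l * (X * (S ^ l).submatrix id ι))ᵀ

/-- `∂L/∂B_(k+1)`: only the scales `l > k` pass through layer `k + 1`. -/
def msGradB (H : ℕ) (W : ∀ l : ℕ, Matrix (Fin my) (Fin (m l)) ℝ)
    (B : ∀ l : ℕ, Matrix (Fin (m (l + 1))) (Fin (m l)) ℝ)
    (V : Matrix (Fin my) (Fin nb) ℝ) (k : ℕ) : Matrix (Fin (m (k + 1))) (Fin (m k)) ℝ :=
  ∑ l ∈ Icc (k + 1) H,
    (W l * Bseg B (k + 1) l)ᵀ * V * (Bseg B 0 k * (X * (S ^ l).submatrix id ι))ᵀ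

variable (W : ∀ l : ℕ, Matrix (Fin my) (Fin (m l)) ℝ)
  (B : ∀ l : ℕ, Matrix (Fin (m (l + 1))) (Fin (m l)) ℝ)

lemma msOut_update_W_add {l : ℕ} (hl : l ≤ H) (N : Matrix (Fin my) (Fin (m l)) ℝ) :
    msOut H X S ι (Function.update W l (W l + N)) B
      = msOut H X S ι W B + N * (Bseg B 0 l * (X * (S ^ l).submatrix id ι)) := by
  have hmem : l ∈ range (H + 1) := mem_range.mpr (by omega)
  have hrest : ∀ l' ∈ (range (H + 1)).erase l,
      Function.update W l (W l + N) l' * Bseg B 0 l' * X * (S ^ l').submatrix id ι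
        = W l' * Bseg B 0 l' * X * (S ^ l').submatrix id ι := fun l' hl' => by
    rw [Function.update_of_ne (ne_of_mem_erase hl')]
  simp only [msOut]
  rw [← sum_erase_add _ _ hmem, ← sum_erase_add _ _ hmem, sum_congr rfl hrest,
    Function.update_self]
  simp only [Matrix.add_mul, Matrix.mul_assoc]
  abel

lemma msOut_update_B_add {k : ℕ} (hk : k < H) (N : Matrix (Fin (m (k + 1))) (Fin (m k)) ℝ) :
    msOut H X S ι W (Function.update B k (B k + N))
      = msOut H X S ι W B + ∑ l ∈ Icc (k + 1) H,
          W l * Bseg B (k + 1) l * N * (Bseg B 0 k * (X * (S ^ l).submatrix id ι)) := by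
  have hsplit : ∀ g : ℕ → Matrix (Fin my) (Fin nb) ℝ,
      ∑ l ∈ range (H + 1), g l = ∑ l ∈ range (k + 1), g l + ∑ l ∈ Icc (k + 1) H, g l := by
    intro g
    rw [range_eq_Ico, range_eq_Ico, ← Ico_add_one_right_eq_Icc,
      sum_Ico_consecutive g (Nat.zero_le _) (by omega)]
  have hlow : ∀ l ∈ range (k + 1),
      W l * Bseg (Function.update B k (B k + N)) 0 l * X * (S ^ l).submatrix id ι
        = W l * Bseg B 0 l * X * (S ^ l).submatrix id ι := fun l hl => by
    rw [Bseg_update_of_le B _ (by simp at hl; omega)]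
  have hhigh : ∀ l ∈ Icc (k + 1) H,
      W l * Bseg (Function.update B k (B k + N)) 0 l * X * (S ^ l).submatrix id ι
        = W l * Bseg B 0 l * X * (S ^ l).submatrix id ι
          + W l * Bseg B (k + 1) l * N * (Bseg B 0 k * (X * (S ^ l).submatrix id ι)) :=
    fun l hl => by
      rw [Bseg_update_add B N (by simp at hl; omega)]
      simp only [Matrix.mul_add, Matrix.add_mul, Matrix.mul_assoc]
  simp only [msOut]
  rw [hsplit, hsplit, sum_congr rfl hlow, sum_congr rfl hhigh, sum_add_distrib, add_assoc]

variable {ℓ : Matrix (Fin my) (Fin nb) ℝ → ℝ}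

lemma entryDeriv_msOut_W (hℓ : Differentiable ℝ ℓ) {l : ℕ} (hl : l ≤ H) :
    entryDeriv (fun M => ℓ (msOut H X S ι (Function.update W l M) B)) (W l)
      = msGradW X S ι B (entryDeriv ℓ (msOut H X S ι W B)) l := by
  ext i j
  rw [entryDeriv_comp_apply hℓ (C := Matrix.single i j (1 : ℝ) *
      (Bseg B 0 l * (X * (S ^ l).submatrix id ι))) fun s => ?_]
  · rw [Function.update_eq_self, frobInner_mul_right, frobInner_single_one]
    rfl
  · rw [msOut_update_W_add X S ι W B hl, Function.update_eq_self, Matrix.smul_mul]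

lemma entryDeriv_msOut_B (hℓ : Differentiable ℝ ℓ) {k : ℕ} (hk : k < H) :
    entryDeriv (fun M => ℓ (msOut H X S ι W (Function.update B k M))) (B k)
      = msGradB X S ι H W B (entryDeriv ℓ (msOut H X S ι W B)) k := by
  ext i j
  rw [entryDeriv_comp_apply hℓ (C := ∑ l ∈ Icc (k + 1) H, W l * Bseg B (k + 1) l *
      Matrix.single i j (1 : ℝ) * (Bseg B 0 k * (X * (S ^ l).submatrix id ι))) fun s => ?_]
  · rw [Function.update_eq_self, frobInner_sum_right, msGradB, Matrix.sum_apply]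
    refine sum_congr rfl fun l _ => ?_
    rw [frobInner_mul_mul, frobInner_single_one]
  · rw [msOut_update_B_add X S ι W B hk, Function.update_eq_self, smul_sum]
    simp only [Matrix.mul_smul, Matrix.smul_mul]

lemma hasEntrywiseDerivWithinAt_msOut {Wt : ℝ → ∀ l : ℕ, Matrix (Fin my) (Fin (m l)) ℝ}
    {Bt : ℝ → ∀ l : ℕ, Matrix (Fin (m (l + 1))) (Fin (m l)) ℝ}
    {W' : ∀ l : ℕ, Matrix (Fin my) (Fin (m l)) ℝ}
    {B' : ∀ l : ℕ, Matrix (Fin (m (l + 1))) (Fin (m l)) ℝ} {s : Set ℝ} {x : ℝ}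
    (hW : ∀ l ≤ H, HasEntrywiseDerivWithinAt (fun u => Wt u l) (W' l) s x)
    (hB : ∀ k < H, HasEntrywiseDerivWithinAt (fun u => Bt u k) (B' k) s x) :
    HasEntrywiseDerivWithinAt (fun u => msOut H X S ι (Wt u) (Bt u))
      (∑ l ∈ range (H + 1), (W' l * Bseg (Bt x) 0 l
          + Wt x l * ∑ k ∈ range l, Bseg (Bt x) (k + 1) l * B' k * Bseg (Bt x) 0 k)
        * X * (S ^ l).submatrix id ι) s x :=
  HasEntrywiseDerivWithinAt.sum _ fun l hl =>
    (((hW l (by simp at hl; omega)).mul (hasEntrywiseDerivWithinAt_Bseg fun k hk =>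
      hB k (by simp at hl; omega))).mul_const X).mul_const _

lemma frobInner_msOut_tangent (V : Matrix (Fin my) (Fin nb) ℝ)
    (W' : ∀ l : ℕ, Matrix (Fin my) (Fin (m l)) ℝ)
    (B' : ∀ l : ℕ, Matrix (Fin (m (l + 1))) (Fin (m l)) ℝ) :
    frobInner V (∑ l ∈ range (H + 1), (W' l * Bseg B 0 l
        + W l * ∑ k ∈ range l, Bseg B (k + 1) l * B' k * Bseg B 0 k) * X * (S ^ l).submatrix id ι)
      = ∑ l ∈ range (H + 1), frobInner (msGradW X S ι B V l) (W' l)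
        + ∑ k ∈ range H, frobInner (msGradB X S ι H W B V k) (B' k) := by
  have hterm : ∀ l, frobInner V ((W' l * Bseg B 0 l
        + W l * ∑ k ∈ range l, Bseg B (k + 1) l * B' k * Bseg B 0 k) * X * (S ^ l).submatrix id ι)
      = frobInner (msGradW X S ι B V l) (W' l) + ∑ k ∈ range l, frobInner
          ((W l * Bseg B (k + 1) l)ᵀ * V * (Bseg B 0 k * (X * (S ^ l).submatrix id ι))ᵀ) (B' k) := by
    intro l
    have hsplit : (W' l * Bseg B 0 l
        + W l * ∑ k ∈ range l, Bseg B (k + 1) l * B' k * Bseg B 0 k) * X * (S ^ l).submatrix id ι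
        = W' l * (Bseg B 0 l * (X * (S ^ l).submatrix id ι)) + ∑ k ∈ range l,
          W l * Bseg B (k + 1) l * B' k * (Bseg B 0 k * (X * (S ^ l).submatrix id ι)) := by
      simp only [Matrix.add_mul, Matrix.mul_sum, Matrix.sum_mul, Matrix.mul_assoc]
    rw [hsplit, frobInner_add_right, frobInner_mul_right, frobInner_sum_right]
    simp only [frobInner_mul_mul, msGradW]
  have hswap : ∀ l k, l ∈ range (H + 1) ∧ k ∈ range l ↔ l ∈ Icc (k + 1) H ∧ k ∈ range H := by
    intro l k
    simp only [mem_range, mem_Icc]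
    omega
  simp only [frobInner_sum_right, hterm, sum_add_distrib, sum_comm' hswap, msGradB,
    frobInner_sum_left]

theorem hasDerivWithinAt_loss_comp_msOut {ℓ : Matrix (Fin my) (Fin nb) ℝ → ℝ}
    (hℓ : Differentiable ℝ ℓ) {Wt : ℝ → ∀ l : ℕ, Matrix (Fin my) (Fin (m l)) ℝ}
    {Bt : ℝ → ∀ l : ℕ, Matrix (Fin (m (l + 1))) (Fin (m l)) ℝ}
    {W' : ∀ l : ℕ, Matrix (Fin my) (Fin (m l)) ℝ}
    {B' : ∀ l : ℕ, Matrix (Fin (m (l + 1))) (Fin (m l)) ℝ} {s : Set ℝ} {x : ℝ}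
    (hW : ∀ l ≤ H, HasEntrywiseDerivWithinAt (fun u => Wt u l) (W' l) s x)
    (hB : ∀ k < H, HasEntrywiseDerivWithinAt (fun u => Bt u k) (B' k) s x) :
    HasDerivWithinAt (fun u => ℓ (msOut H X S ι (Wt u) (Bt u)))
      (∑ l ∈ range (H + 1),
          frobInner (msGradW X S ι (Bt x) (entryDeriv ℓ (msOut H X S ι (Wt x) (Bt x))) l) (W' l)
        + ∑ k ∈ range H, frobInner
          (msGradB X S ι H (Wt x) (Bt x) (entryDeriv ℓ (msOut H X S ι (Wt x) (Bt x))) k) (B' k))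
      s x := by
  rw [← frobInner_msOut_tangent]
  exact (hasEntrywiseDerivWithinAt_msOut X S ι hW hB).hasDerivWithinAt_comp hℓ

lemma quadForm_eq_frobSq_msGradW (V : Matrix (Fin my) (Fin nb) ℝ) (l : ℕ) :
    quadForm (((Bseg B 0 l)ᵀ * Bseg B 0 l) ⊗ₖ (1 : Matrix (Fin my) (Fin my) ℝ))
      (vecM (V * (X * (S ^ l).submatrix id ι)ᵀ)) = frobSq (msGradW X S ι B V l) := by
  simp only [quadForm_kronecker_one, msGradW, Matrix.transpose_mul, Matrix.mul_assoc]

lemma vecNormSq_eq_frobSq_msGradB (V : Matrix (Fin my) (Fin nb) ℝ) (k : ℕ) :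
    vecNormSq (∑ l ∈ Icc (k + 1) H, (Bseg B 0 k ⊗ₖ (W l * Bseg B (k + 1) l)ᵀ)
      *ᵥ vecM (V * (X * (S ^ l).submatrix id ι)ᵀ)) = frobSq (msGradB X S ι H W B V k) := by
  simp only [kronecker_mulVec_vecM, ← vecM_sum, vecNormSq_vecM, msGradB, Matrix.transpose_mul,
    Matrix.mul_assoc]

end MultiscaleGNN

theorem stmt8_general {n nb my H : ℕ} {m : ℕ → ℕ}
    (X : Matrix (Fin (m 0)) (Fin n) ℝ) (S : Matrix (Fin n) (Fin n) ℝ)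
    (ι : Fin nb → Fin n)
    (ℓ : Matrix (Fin my) (Fin nb) ℝ → ℝ) (hℓ : Differentiable ℝ ℓ)
    (Wt : ℝ → ∀ l : ℕ, Matrix (Fin my) (Fin (m l)) ℝ)
    (Bt : ℝ → ∀ l : ℕ, Matrix (Fin (m (l + 1))) (Fin (m l)) ℝ)
    (hW : ∀ t ∈ Set.Ici (0 : ℝ), ∀ l ≤ H, ∀ i j,
      HasDerivWithinAt (fun s => Wt s l i j)
        (-(entryDeriv
            (fun M : Matrix (Fin my) (Fin (m l)) ℝ =>
              ℓ (msOut H X S ι (Function.update (Wt t) l M) (Bt t))) (Wt t l)) i j)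
        (Set.Ici 0) t)
    (hB : ∀ t ∈ Set.Ici (0 : ℝ), ∀ l < H, ∀ i j,
      HasDerivWithinAt (fun s => Bt s l i j)
        (-(entryDeriv
            (fun M : Matrix (Fin (m (l + 1))) (Fin (m l)) ℝ =>
              ℓ (msOut H X S ι (Wt t) (Function.update (Bt t) l M))) (Bt t l)) i j)
        (Set.Ici 0) t) :
    ∀ t ∈ Set.Ici (0 : ℝ),
      ∀ V : Matrix (Fin my) (Fin nb) ℝ,
      V = entryDeriv ℓ (msOut H X S ι (Wt t) (Bt t)) →
      HasDerivWithinAt (fun s => ℓ (msOut H X S ι (Wt s) (Bt s)))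
        (-((∑ l ∈ Finset.range (H + 1),
            quadForm (((Bseg (Bt t) 0 l)ᵀ * Bseg (Bt t) 0 l) ⊗ₖ
                (1 : Matrix (Fin my) (Fin my) ℝ))
              (vecM (V * (X * (S ^ l).submatrix id ι)ᵀ)))
          + ∑ i ∈ Finset.range H,
            vecNormSq (∑ l ∈ Finset.Icc (i + 1) H,
              (Bseg (Bt t) 0 i ⊗ₖ (Wt t l * Bseg (Bt t) (i + 1) l)ᵀ).mulVec
                (vecM (V * (X * (S ^ l).submatrix id ι)ᵀ)))))
        (Set.Ici 0) t := by
  intro t ht V hV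
  have hW' : ∀ l ≤ H, HasEntrywiseDerivWithinAt (fun s => Wt s l)
      (-msGradW X S ι (Bt t) V l) (Set.Ici 0) t := fun l hl => by
    rw [hV, ← entryDeriv_msOut_W X S ι (Wt t) (Bt t) hℓ hl]
    exact hW t ht l hl
  have hB' : ∀ k < H, HasEntrywiseDerivWithinAt (fun s => Bt s k)
      (-msGradB X S ι H (Wt t) (Bt t) V k) (Set.Ici 0) t := fun k hk => by
    rw [hV, ← entryDeriv_msOut_B X S ι (Wt t) (Bt t) hℓ hk]
    exact hB t ht k hk
  convert hasDerivWithinAt_loss_comp_msOut X S ι hℓ hW' hB' using 1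
  simp only [← hV, frobInner_neg_right, frobInner_self, quadForm_eq_frobSq_msGradW,
    vecNormSq_eq_frobSq_msGradB, sum_neg_distrib, neg_add]

/-- Theorem 3(ii) of the paper: exact loss-reduction formula for the
multiscale linear GNN under any differentiable loss `ℓ`:
`d/dt L = −Σ_{l=0}^H ‖vec[V_t (X(S^l)_{*I})ᵀ]‖²_{F_{(l),t}}
        − Σ_{i=1}^H ‖Σ_{l=i}^H J_{(i,l),t} vec[V_t (X(S^l)_{*I})ᵀ]‖₂²`
(the outer sum over the paper's `i ∈ {1,…,H}` is written below over `i ∈ range H`,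
with paper-`i` equal to `i+1`). -/
theorem stmt8 {n nb my H : ℕ} {m : ℕ → ℕ}
    (X : Matrix (Fin (m 0)) (Fin n) ℝ) (S : Matrix (Fin n) (Fin n) ℝ)
    (ι : Fin nb → Fin n) (hι : Function.Injective ι)
    (ℓ : Matrix (Fin my) (Fin nb) ℝ → ℝ) (hℓ : Differentiable ℝ ℓ)
    (Wt : ℝ → ∀ l : ℕ, Matrix (Fin my) (Fin (m l)) ℝ)
    (Bt : ℝ → ∀ l : ℕ, Matrix (Fin (m (l + 1))) (Fin (m l)) ℝ)
    (hW : ∀ t ∈ Set.Ici (0 : ℝ), ∀ l ≤ H, ∀ i j,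
      HasDerivWithinAt (fun s => Wt s l i j)
        (-(entryDeriv
            (fun M : Matrix (Fin my) (Fin (m l)) ℝ =>
              ℓ (msOut H X S ι (Function.update (Wt t) l M) (Bt t))) (Wt t l)) i j)
        (Set.Ici 0) t)
    (hB : ∀ t ∈ Set.Ici (0 : ℝ), ∀ l < H, ∀ i j,
      HasDerivWithinAt (fun s => Bt s l i j)
        (-(entryDeriv
            (fun M : Matrix (Fin (m (l + 1))) (Fin (m l)) ℝ =>
              ℓ (msOut H X S ι (Wt t) (Function.update (Bt t) l M))) (Bt t l)) i j)
        (Set.Ici 0) t) :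
    ∀ t ∈ Set.Ici (0 : ℝ),
      ∀ V : Matrix (Fin my) (Fin nb) ℝ,
      V = entryDeriv ℓ (msOut H X S ι (Wt t) (Bt t)) →
      HasDerivWithinAt (fun s => ℓ (msOut H X S ι (Wt s) (Bt s)))
        (-((∑ l ∈ Finset.range (H + 1),
            quadForm (((Bseg (Bt t) 0 l)ᵀ * Bseg (Bt t) 0 l) ⊗ₖ
                (1 : Matrix (Fin my) (Fin my) ℝ))
              (vecM (V * (X * (S ^ l).submatrix id ι)ᵀ)))
          + ∑ i ∈ Finset.range H,
            vecNormSq (∑ l ∈ Finset.Icc (i + 1) H,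
              (Bseg (Bt t) 0 i ⊗ₖ (Wt t l * Bseg (Bt t) (i + 1) l)ᵀ).mulVec
                (vecM (V * (X * (S ^ l).submatrix id ι)ᵀ)))))
        (Set.Ici 0) t :=
  stmt8_general X S ι ℓ hℓ Wt Bt hW hB

end
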